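/- Let R be a ℤ-graded commutative algebra over a field F of odd characteristic. An element of R is nilpotent if and only if all of its homogeneous components are nilpotent. -/

import Mathlib

/-!
Over a field with `2 ≠ 0`, homogeneous elements of even degree are central and those of odd
degree square to zero. Hence `x = e + o` with `e` the (central) even part and `o² = 0`, so `x` is
nilpotent iff `e` is, and odd components are nilpotent anyway. The components of `e` commute
pairwise, and for such elements nilpotency is detected componentwise: the top-degree component of
`yⁿ` is the `n`-th power of the top component of `y`, so the top component of a nilpotent `y` is
nilpotent; subtracting it keeps `y` nilpotent and shrinks its support.
-/

open DirectSum

namespace DirectSum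

section Semiring

variable {ι A σ : Type*} [DecidableEq ι] [AddCommMonoid ι] [LinearOrder ι]
  [IsOrderedCancelAddMonoid ι] [Semiring A] [SetLike σ A] [AddSubmonoidClass σ A]
  (𝒜 : ι → σ) [GradedRing 𝒜]

theorem coe_decompose_mul_eq_zero_of_lt {y z : A} {d e k : ι}
    (hy : ∀ i, d < i → (decompose 𝒜 y i : A) = 0) (hz : ∀ j, e < j → (decompose 𝒜 z j : A) = 0)
    (hk : d + e < k) : (decompose 𝒜 (y * z) k : A) = 0 := by
  classical
  rw [decompose_mul, coe_mul_apply]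
  refine Finset.sum_eq_zero fun ij hij => ?_
  simp only [Finset.mem_filter, Finset.mem_product, GradedRing.mem_support_iff,
    GradedRing.proj_apply] at hij
  obtain ⟨⟨hi, hj⟩, rfl⟩ := hij
  exact absurd hk (not_lt.mpr (add_le_add (not_lt.mp (mt (hy _) hi)) (not_lt.mp (mt (hz _) hj))))

theorem coe_decompose_mul_add_of_forall_lt {y z : A} {d e : ι}
    (hy : ∀ i, d < i → (decompose 𝒜 y i : A) = 0) (hz : ∀ j, e < j → (decompose 𝒜 z j : A) = 0) :
    (decompose 𝒜 (y * z) (d + e) : A) = decompose 𝒜 y d * decompose 𝒜 z e := by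
  classical
  rw [decompose_mul, coe_mul_apply]
  refine (Finset.sum_eq_single (d, e) (fun ij hij hne => ?_) fun hde => ?_)
  · simp only [Finset.mem_filter, Finset.mem_product, GradedRing.mem_support_iff,
      GradedRing.proj_apply] at hij
    obtain ⟨⟨hi, hj⟩, hij⟩ := hij
    have hi' := not_lt.mp (mt (hy _) hi)
    have hj' := not_lt.mp (mt (hz _) hj)
    exfalso
    rcases hi'.lt_or_eq with hi'' | rfl
    · exact (add_lt_add_of_lt_of_le hi'' hj').ne hij
    · exact hne (Prod.ext rfl (add_left_cancel hij))
  · simp only [Finset.mem_filter, Finset.mem_product, GradedRing.mem_support_iff,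
      GradedRing.proj_apply, and_true, not_and_or, not_not] at hde
    rcases hde with h | h <;> simp [h]

theorem coe_decompose_pow_eq_zero_of_lt {y : A} {d : ι}
    (hy : ∀ i, d < i → (decompose 𝒜 y i : A) = 0) (n : ℕ) {k : ι} (hk : n • d < k) :
    (decompose 𝒜 (y ^ n) k : A) = 0 := by
  induction n generalizing k with
  | zero =>
    rw [zero_nsmul] at hk
    rw [pow_zero]
    exact decompose_of_mem_ne 𝒜 (SetLike.one_mem_graded 𝒜) hk.ne
  | succ n ih =>
    rw [succ_nsmul] at hk
    rw [pow_succ]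
    exact coe_decompose_mul_eq_zero_of_lt 𝒜 (fun i hi => ih hi) hy hk

theorem coe_decompose_pow_nsmul {y : A} {d : ι}
    (hy : ∀ i, d < i → (decompose 𝒜 y i : A) = 0) (n : ℕ) :
    (decompose 𝒜 (y ^ n) (n • d) : A) = (decompose 𝒜 y d : A) ^ n := by
  induction n with
  | zero =>
    rw [pow_zero, pow_zero, zero_nsmul]
    exact decompose_of_mem_same 𝒜 (SetLike.one_mem_graded 𝒜)
  | succ n ih =>
    rw [pow_succ, succ_nsmul, coe_decompose_mul_add_of_forall_lt 𝒜
      (fun i hi => coe_decompose_pow_eq_zero_of_lt 𝒜 hy n hi) hy, ih, pow_succ]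

theorem isNilpotent_decompose_of_forall_lt {y : A} {d : ι}
    (hy : ∀ i, d < i → (decompose 𝒜 y i : A) = 0) (hnil : IsNilpotent y) :
    IsNilpotent (decompose 𝒜 y d : A) := by
  obtain ⟨n, hn⟩ := hnil
  exact ⟨n, by rw [← coe_decompose_pow_nsmul 𝒜 hy, hn, decompose_zero]; rfl⟩

end Semiring

section Ring

variable {ι A σ : Type*} [DecidableEq ι] [Ring A] [SetLike σ A] [AddSubgroupClass σ A]

theorem commute_of_forall_commute_decompose (𝒜 : ι → σ) [Decomposition 𝒜] {y z : A}
    (h : ∀ i, Commute (decompose 𝒜 y i : A) z) : Commute y z := by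
  classical
  rw [← sum_support_decompose 𝒜 y]
  exact Commute.sum_left _ _ _ fun i _ => h i

theorem mul_self_eq_neg_of_anticommute_decompose (𝒜 : ι → σ) [Decomposition 𝒜] {y : A}
    (h : ∀ i j, (decompose 𝒜 y i : A) * decompose 𝒜 y j = -(decompose 𝒜 y j * decompose 𝒜 y i)) :
    y * y = -(y * y) := by
  classical
  rw [← sum_support_decompose 𝒜 y, Finset.sum_mul_sum]
  conv_rhs => rw [Finset.sum_comm, ← Finset.sum_neg_distrib]
  exact Finset.sum_congr rfl fun i _ => by
    rw [← Finset.sum_neg_distrib]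
    exact Finset.sum_congr rfl fun j _ => h i j

theorem coe_decompose_sub_coe_decompose (𝒜 : ι → σ) [Decomposition 𝒜] (y : A) (a i : ι) :
    (decompose 𝒜 (y - decompose 𝒜 y a) i : A) = if i = a then 0 else decompose 𝒜 y i := by
  rw [decompose_sub, sub_apply, AddSubgroupClass.coe_sub]
  split_ifs with h
  · rw [h, decompose_of_mem_same 𝒜 (SetLike.coe_mem _), sub_self, ZeroMemClass.coe_zero]
  · rw [decompose_of_mem_ne 𝒜 (SetLike.coe_mem _) (Ne.symm h), sub_zero]

variable [AddCommMonoid ι] [LinearOrder ι] [IsOrderedCancelAddMonoid ι] (𝒜 : ι → σ) [GradedRing 𝒜]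

theorem isNilpotent_decompose_of_commute {y : A}
    (hc : ∀ i j, Commute (decompose 𝒜 y i : A) (decompose 𝒜 y j)) (hy : IsNilpotent y) (i : ι) :
    IsNilpotent (decompose 𝒜 y i : A) := by
  classical
  suffices key : ∀ s : Finset ι, ∀ y : A, (∀ i ∉ s, (decompose 𝒜 y i : A) = 0) →
      (∀ i j, Commute (decompose 𝒜 y i : A) (decompose 𝒜 y j)) → IsNilpotent y →
      ∀ i, IsNilpotent (decompose 𝒜 y i : A) from
    key _ y (fun i hi => by rwa [GradedRing.mem_support_iff 𝒜, not_not] at hi) hc hy i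
  intro s
  induction s using Finset.induction_on_max with
  | empty =>
    intro y hs _ _ i
    rw [hs i (Finset.notMem_empty i)]
    exact IsNilpotent.zero
  | insert a s ha ih =>
    intro y hs hc hy i
    have htop : IsNilpotent (decompose 𝒜 y a : A) :=
      isNilpotent_decompose_of_forall_lt 𝒜 (fun k hk => hs k fun hks =>
        (Finset.mem_insert.mp hks).elim hk.ne' fun hk' => (ha k hk').not_gt hk) hy
    have hb := coe_decompose_sub_coe_decompose 𝒜 y a
    have hbnil : IsNilpotent (y - decompose 𝒜 y a) :=
      (commute_of_forall_commute_decompose 𝒜 fun j => hc j a).isNilpotent_sub hy htop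
    have hbs : ∀ k ∉ s, (decompose 𝒜 (y - decompose 𝒜 y a) k : A) = 0 := fun k hk => by
      rw [hb]
      split_ifs with hka
      · rfl
      · exact hs k (by simp [hka, hk])
    have hbc : ∀ j k, Commute (decompose 𝒜 (y - decompose 𝒜 y a) j : A)
        (decompose 𝒜 (y - decompose 𝒜 y a) k) := fun j k => by
      simp only [hb]
      split_ifs <;> simp [hc]
    rcases eq_or_ne i a with rfl | hia
    · exact htop
    · simpa only [hb, hia, if_false] using ih _ hbs hbc hbnil i

theorem isNilpotent_iff_forall_isNilpotent_decompose {y : A}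
    (hc : ∀ i j, Commute (decompose 𝒜 y i : A) (decompose 𝒜 y j)) :
    IsNilpotent y ↔ ∀ i, IsNilpotent (decompose 𝒜 y i : A) := by
  classical
  refine ⟨isNilpotent_decompose_of_commute 𝒜 hc, fun h => ?_⟩
  rw [← sum_support_decompose 𝒜 y]
  exact Commute.isNilpotent_sum (fun i _ => h i) fun i j _ _ => hc i j

end Ring

section Parity

variable {M σ : Type*} [AddCommGroup M] [SetLike σ M] [AddSubgroupClass σ M]
  (𝒜 : ℤ → σ) [Decomposition 𝒜]

def evenPart (x : M) : M :=
  (decompose 𝒜).symm ((decompose 𝒜 x).filter Even)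

def oddPart (x : M) : M :=
  (decompose 𝒜).symm ((decompose 𝒜 x).filter fun i => Odd i)

theorem coe_decompose_evenPart (x : M) (i : ℤ) :
    (decompose 𝒜 (evenPart 𝒜 x) i : M) = if Even i then (decompose 𝒜 x i : M) else 0 := by
  simp only [evenPart, Equiv.apply_symm_apply, DFinsupp.filter_apply]
  split_ifs <;> rfl

theorem coe_decompose_oddPart (x : M) (i : ℤ) :
    (decompose 𝒜 (oddPart 𝒜 x) i : M) = if Odd i then (decompose 𝒜 x i : M) else 0 := by
  simp only [oddPart, Equiv.apply_symm_apply, DFinsupp.filter_apply]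
  split_ifs <;> rfl

theorem evenPart_add_oddPart (x : M) : evenPart 𝒜 x + oddPart 𝒜 x = x := by
  simp_rw [evenPart, oddPart, ← Int.not_even_iff_odd]
  rw [← decompose_symm_add, DFinsupp.filter_add_filter_not, Equiv.symm_apply_apply]

end Parity

end DirectSum

theorem Commute.isNilpotent_add_iff_left {R : Type*} [Ring R] {x y : R} (h : Commute x y)
    (hy : IsNilpotent y) : IsNilpotent (x + y) ↔ IsNilpotent x :=
  ⟨fun hxy => by simpa using (h.add_left (Commute.refl y)).isNilpotent_sub hxy hy,
    fun hx => h.isNilpotent_add hx hy⟩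

theorem eq_zero_of_eq_neg_of_two_ne_zero {F M : Type*} [DivisionRing F] [AddCommGroup M]
    [Module F M] (h2 : (2 : F) ≠ 0) {v : M} (hv : v = -v) : v = 0 := by
  have : (2 : F) • v = 0 := by rw [two_smul]; nth_rewrite 1 [hv]; exact neg_add_cancel v
  exact (smul_eq_zero.mp this).resolve_left h2

def IsGradedCommutative {F R : Type*} [Field F] [Ring R] [Algebra F R] (𝒜 : ℤ → Submodule F R) :
    Prop :=
  ∀ (i j : ℤ) (x y : R), x ∈ 𝒜 i → y ∈ 𝒜 j → x * y = ((-1 : F) ^ (i * j)) • (y * x)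

namespace IsGradedCommutative

variable {F R : Type*} [Field F] [Ring R] [Algebra F R] {𝒜 : ℤ → Submodule F R}
  {i j : ℤ} {p q : R}

theorem mul_eq_neg_mul_of_odd (h𝒜 : IsGradedCommutative 𝒜) (hi : Odd i) (hj : Odd j)
    (hp : p ∈ 𝒜 i) (hq : q ∈ 𝒜 j) : p * q = -(q * p) := by
  rw [h𝒜 i j p q hp hq, (hi.mul hj).neg_one_zpow, neg_one_smul]

theorem mul_self_eq_zero_of_odd (h𝒜 : IsGradedCommutative 𝒜) (h2 : (2 : F) ≠ 0) (hi : Odd i)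
    (hp : p ∈ 𝒜 i) : p * p = 0 :=
  eq_zero_of_eq_neg_of_two_ne_zero h2 (h𝒜.mul_eq_neg_mul_of_odd hi hi hp hp)

variable [GradedAlgebra 𝒜]

theorem commute_of_even (h𝒜 : IsGradedCommutative 𝒜) (hi : Even i) (hp : p ∈ 𝒜 i) (z : R) :
    Commute p z := by
  induction z using Decomposition.inductionOn 𝒜 with
  | zero => exact Commute.zero_right p
  | @homogeneous j q =>
    rw [Commute, SemiconjBy, h𝒜 i j p q hp q.2, (hi.mul_right j).neg_one_zpow, one_smul]
  | add z z' hz hz' => exact hz.add_right hz'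

theorem commute_decompose_evenPart (h𝒜 : IsGradedCommutative 𝒜) (x : R) (i : ℤ) (z : R) :
    Commute (decompose 𝒜 (evenPart 𝒜 x) i : R) z := by
  rw [coe_decompose_evenPart]
  split_ifs with hi
  · exact h𝒜.commute_of_even hi (SetLike.coe_mem _) z
  · exact Commute.zero_left z

theorem oddPart_mul_self (h𝒜 : IsGradedCommutative 𝒜) (h2 : (2 : F) ≠ 0) (x : R) :
    oddPart 𝒜 x * oddPart 𝒜 x = 0 := by
  refine eq_zero_of_eq_neg_of_two_ne_zero h2 <|
    mul_self_eq_neg_of_anticommute_decompose 𝒜 fun i j => ?_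
  simp only [coe_decompose_oddPart]
  split_ifs with hi hj
  · exact h𝒜.mul_eq_neg_mul_of_odd hi hj (SetLike.coe_mem _) (SetLike.coe_mem _)
  all_goals simp

theorem isNilpotent_iff_isNilpotent_evenPart (h𝒜 : IsGradedCommutative 𝒜) (h2 : (2 : F) ≠ 0)
    (x : R) : IsNilpotent x ↔ IsNilpotent (evenPart 𝒜 x) := by
  have hcomm : Commute (evenPart 𝒜 x) (oddPart 𝒜 x) :=
    commute_of_forall_commute_decompose 𝒜 fun i => h𝒜.commute_decompose_evenPart x i _
  conv_lhs => rw [← evenPart_add_oddPart 𝒜 x]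
  exact hcomm.isNilpotent_add_iff_left ⟨2, by rw [sq, h𝒜.oddPart_mul_self h2]⟩

end IsGradedCommutative

/-- In a ℤ-graded commutative algebra over a field of odd characteristic,
an element is nilpotent if and only if all of its homogeneous components are nilpotent. -/
theorem stmt_3 (F : Type*) [Field F] (hF : Odd (ringChar F))
    (R : Type*) [Ring R] [Algebra F R]
    (𝒜 : ℤ → Submodule F R) [GradedAlgebra 𝒜]
    (hcomm : ∀ (i j : ℤ) (x y : R), x ∈ 𝒜 i → y ∈ 𝒜 j →
      x * y = ((-1 : F) ^ (i * j)) • (y * x))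
    (x : R) :
    IsNilpotent x ↔ ∀ i : ℤ, IsNilpotent ((DirectSum.decompose 𝒜 x i : R)) := by
  have h2 : (2 : F) ≠ 0 := Ring.two_ne_zero fun h => by rw [h] at hF; exact absurd hF (by decide)
  have h𝒜 : IsGradedCommutative 𝒜 := hcomm
  rw [h𝒜.isNilpotent_iff_isNilpotent_evenPart h2, isNilpotent_iff_forall_isNilpotent_decompose 𝒜
    fun i j => h𝒜.commute_decompose_evenPart x i _]
  refine forall_congr' fun i => ?_
  rw [coe_decompose_evenPart]
  split_ifs with hi
  · rfl
  · have hsq := h𝒜.mul_self_eq_zero_of_odd h2 (Int.not_even_iff_odd.mp hi)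
      (SetLike.coe_mem (decompose 𝒜 x i))
    exact iff_of_true IsNilpotent.zero ⟨2, by rw [sq, hsq]⟩
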